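/- arXiv:2106.05216 — 3 statements merged into one kernel-verified Lean document; each statement's English description precedes it below -/
import Mathlib

section
/- (Comparison lemma on a fixed domain) Assume J₁, J₂ satisfy condition (J), d₁, d₂ > 0, h₀ > 0, T > 0, and set Ω₀ = [0, T] × [−h₀, h₀]. Suppose A, B, C, D ∈ L^∞(Ω₀) with B ≥ 0 and C ≥ 0, and (u, v) together with (u_t, v_t) are continuous on Ω₀ and satisfy: u_t(t,x) ≥ d₁∫_{−h₀}^{h₀} J₁(x−y) u(t,y) dy − d₁u + A·u + B·v and v_t(t,x) ≥ d₂∫_{−h₀}^{h₀} J₂(x−y) v(t,y) dy − d₂v + D·v + C·u for 0 < t ≤ T, −h₀ ≤ x ≤ h₀, together with u(0,x) ≥ 0 and v(0,x) ≥ 0 for |x| ≤ h₀. Then u(t,x) ≥ 0 and v(t,x) ≥ 0 for all 0 < t ≤ T and −h₀ ≤ x ≤ h₀. -/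
open MeasureTheory Set Filter

noncomputable section

/-- Condition (J) on a dispersal kernel: continuous, bounded, nonnegative, even,
positive at the origin, with total integral one. -/
def KernelCond (J : ℝ → ℝ) : Prop :=
  Continuous J ∧ (∃ C : ℝ, ∀ x : ℝ, |J x| ≤ C) ∧ (∀ x : ℝ, 0 ≤ J x) ∧
    (∀ x : ℝ, J (-x) = J x) ∧ 0 < J 0 ∧ (∫ x : ℝ, J x) = 1

/-- Condition (HG) on the reaction functions `H`, `G` (with constants `a`, `b`). -/
def HGcond (a b : ℝ) (H G : ℝ → ℝ) : Prop :=
  ContDiffOn ℝ 2 H (Ici 0) ∧ ContDiffOn ℝ 2 G (Ici 0) ∧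
    H 0 = 0 ∧ G 0 = 0 ∧
    (∀ z : ℝ, 0 ≤ z → 0 < deriv H z ∧ 0 < deriv G z) ∧
    (∀ z : ℝ, 0 < z → deriv (deriv H) z < 0 ∧ deriv (deriv G) z < 0) ∧
    (∃ zbar : ℝ, 0 < zbar ∧ G (H zbar / a) < b * zbar)

/-- Condition (I) on the initial data. -/
def InitCond (h₀ : ℝ) (u₀ v₀ : ℝ → ℝ) : Prop :=
  ContinuousOn u₀ (Icc (-h₀) h₀) ∧ ContinuousOn v₀ (Icc (-h₀) h₀) ∧
    u₀ (-h₀) = 0 ∧ u₀ h₀ = 0 ∧ v₀ (-h₀) = 0 ∧ v₀ h₀ = 0 ∧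
    (∀ x ∈ Ioo (-h₀) h₀, 0 < u₀ x ∧ 0 < v₀ x)

/-- A (global-in-time) solution of the free boundary problem (P). -/
def IsGlobalSolution (J₁ J₂ H G : ℝ → ℝ) (d₁ d₂ a b μ ρ h₀ : ℝ)
    (u₀ v₀ : ℝ → ℝ) (u v : ℝ → ℝ → ℝ) (g h : ℝ → ℝ) : Prop :=
  ContinuousOn g (Ici 0) ∧ ContinuousOn h (Ici 0) ∧
  g 0 = -h₀ ∧ h 0 = h₀ ∧
  StrictMonoOn h (Ici 0) ∧ StrictAntiOn g (Ici 0) ∧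
  ContinuousOn (fun p : ℝ × ℝ => u p.1 p.2)
    {p : ℝ × ℝ | 0 ≤ p.1 ∧ p.2 ∈ Icc (g p.1) (h p.1)} ∧
  ContinuousOn (fun p : ℝ × ℝ => v p.1 p.2)
    {p : ℝ × ℝ | 0 ≤ p.1 ∧ p.2 ∈ Icc (g p.1) (h p.1)} ∧
  (∀ t : ℝ, 0 ≤ t → ∀ x : ℝ, x ∉ Icc (g t) (h t) → u t x = 0 ∧ v t x = 0) ∧
  (∀ t : ℝ, 0 ≤ t → ∀ x : ℝ, 0 ≤ u t x ∧ 0 ≤ v t x) ∧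
  (∀ t : ℝ, 0 < t → ∀ x ∈ Ioo (g t) (h t),
    HasDerivAt (fun s => u s x)
      (d₁ * ((∫ y in g t..h t, J₁ (x - y) * u t y) - u t x) - a * u t x + H (v t x)) t ∧
    HasDerivAt (fun s => v s x)
      (d₂ * ((∫ y in g t..h t, J₂ (x - y) * v t y) - v t x) - b * v t x + G (u t x)) t) ∧
  (∀ t : ℝ, 0 < t → u t (g t) = 0 ∧ u t (h t) = 0 ∧ v t (g t) = 0 ∧ v t (h t) = 0) ∧
  (∀ t : ℝ, 0 < t →
    HasDerivAt h
      (μ * ((∫ x in g t..h t, ∫ y in Ioi (h t), J₁ (x - y) * u t x) +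
        ρ * (∫ x in g t..h t, ∫ y in Ioi (h t), J₂ (x - y) * v t x))) t ∧
    HasDerivAt g
      (-(μ * ((∫ x in g t..h t, ∫ y in Iio (g t), J₁ (x - y) * u t x) +
        ρ * (∫ x in g t..h t, ∫ y in Iio (g t), J₂ (x - y) * v t x)))) t) ∧
  (∀ x ∈ Icc (-h₀) h₀, u 0 x = u₀ x ∧ v 0 x = v₀ x)

/-- Vanishing: the habitat stays bounded and `(u,v) → (0,0)` uniformly on `[g(t), h(t)]`. -/
def Vanishing (u v : ℝ → ℝ → ℝ) (g h : ℝ → ℝ) : Prop :=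
  (∃ l : ℝ, Tendsto (fun t => h t - g t) atTop (nhds l)) ∧
  (∀ ε : ℝ, 0 < ε → ∃ T : ℝ, ∀ t : ℝ, T ≤ t → ∀ x ∈ Icc (g t) (h t),
    |u t x| < ε ∧ |v t x| < ε)

/-- Spreading: the habitat expands to all of `ℝ` and `(u,v) → (K₁,K₂)` locally uniformly. -/
def Spreading (u v : ℝ → ℝ → ℝ) (g h : ℝ → ℝ) (K₁ K₂ : ℝ) : Prop :=
  Tendsto h atTop atTop ∧ Tendsto g atTop atBot ∧
  (∀ ε : ℝ, 0 < ε → ∀ R : ℝ, 0 < R → ∃ T : ℝ, ∀ t : ℝ, T ≤ t → ∀ x ∈ Icc (-R) R,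
    |u t x - K₁| < ε ∧ |v t x - K₂| < ε)

/-- `lam` is a principal eigenvalue of the nonlocal cooperative operator
`M = D(N - I) + A` on `[L₁, L₂]`: it admits a continuous, componentwise strictly
positive eigenfunction pair. -/
def IsPrincipalEV (J₁ J₂ : ℝ → ℝ) (d₁ d₂ L₁ L₂ a11 a12 a21 a22 lam : ℝ) : Prop :=
  ∃ φ₁ φ₂ : ℝ → ℝ,
    ContinuousOn φ₁ (Icc L₁ L₂) ∧ ContinuousOn φ₂ (Icc L₁ L₂) ∧
    (∀ x ∈ Icc L₁ L₂, 0 < φ₁ x ∧ 0 < φ₂ x) ∧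
    (∀ x ∈ Icc L₁ L₂,
      d₁ * ((∫ y in L₁..L₂, J₁ (x - y) * φ₁ y) - φ₁ x) + a11 * φ₁ x + a12 * φ₂ x
        + lam * φ₁ x = 0 ∧
      d₂ * ((∫ y in L₁..L₂, J₂ (x - y) * φ₂ y) - φ₂ x) + a21 * φ₁ x + a22 * φ₂ x
        + lam * φ₂ x = 0)

/-- `lam` is the principal eigenvalue `λ_p(L₁, L₂)` of the linearization of the
epidemic system at `(0,0)`. -/
def IsLamP (J₁ J₂ H G : ℝ → ℝ) (d₁ d₂ a b L₁ L₂ lam : ℝ) : Prop :=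
  IsPrincipalEV J₁ J₂ (d₁ / deriv H 0) (d₂ / deriv G 0) L₁ L₂
    (-(a / deriv H 0)) 1 1 (-(b / deriv G 0)) lam

/-- A (continuous) solution of the steady-state system on `[L₁, L₂]`. -/
def SteadyState (J₁ J₂ H G : ℝ → ℝ) (d₁ d₂ a b L₁ L₂ : ℝ) (U V : ℝ → ℝ) : Prop :=
  ContinuousOn U (Icc L₁ L₂) ∧ ContinuousOn V (Icc L₁ L₂) ∧
  ∀ x ∈ Icc L₁ L₂,
    d₁ * ((∫ y in L₁..L₂, J₁ (x - y) * U y) - U x) - a * U x + H (V x) = 0 ∧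
    d₂ * ((∫ y in L₁..L₂, J₂ (x - y) * V y) - V x) - b * V x + G (U x) = 0

/-- A solution of the fixed-boundary evolution problem on `[L₁, L₂]`. -/
def FixedSol (J₁ J₂ H G : ℝ → ℝ) (d₁ d₂ a b L₁ L₂ : ℝ) (U₀ V₀ : ℝ → ℝ)
    (U V : ℝ → ℝ → ℝ) : Prop :=
  ContinuousOn (fun p : ℝ × ℝ => U p.1 p.2) (Ici 0 ×ˢ Icc L₁ L₂) ∧
  ContinuousOn (fun p : ℝ × ℝ => V p.1 p.2) (Ici 0 ×ˢ Icc L₁ L₂) ∧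
  (∀ x ∈ Icc L₁ L₂, U 0 x = U₀ x ∧ V 0 x = V₀ x) ∧
  (∀ t : ℝ, 0 < t → ∀ x ∈ Icc L₁ L₂,
    HasDerivAt (fun s => U s x)
      (d₁ * ((∫ y in L₁..L₂, J₁ (x - y) * U t y) - U t x) - a * U t x + H (V t x)) t ∧
    HasDerivAt (fun s => V s x)
      (d₂ * ((∫ y in L₁..L₂, J₂ (x - y) * V t y) - V t x) - b * V t x + G (U t x)) t)

/-- One component of the nonlocal cooperative operator `M`:
`(Mc J d L₁ L₂ c₁ c₂ φ ψ)(x) = d (∫ J(x-y) φ(y) dy − φ(x)) + c₁ φ(x) + c₂ ψ(x)`. -/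
def Mcomp (J : ℝ → ℝ) (d L₁ L₂ c₁ c₂ : ℝ) (φ ψ : ℝ → ℝ) : ℝ → ℝ :=
  fun x => d * ((∫ y in L₁..L₂, J (x - y) * φ y) - φ x) + c₁ * φ x + c₂ * ψ x

/-!
If `(u, v)` became negative, the minimum of `e^{-Kt} min(u, v)` over `Ω₀`, with `K` larger than
every `A + B` and `D + C`, would be negative and attained at some `(t₀, x₀)` with `t₀ > 0`, say
by `u`. Since `∫ J ≤ 1`, the nonlocal diffusion at a nonpositive spatial minimum is nonnegative,
so the inequality for `u` gives `u_t ≥ (A + B) u > K u` at `(t₀, x₀)`; but `e^{-Kt} u(t, x₀)`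
is minimal on `[0, t₀]` at `t₀`, which forces `u_t ≤ K u` there.
-/

open Real

lemma KernelCond.integrable {J : ℝ → ℝ} (hJ : KernelCond J) : Integrable J := by
  by_contra h
  simpa [integral_undef h] using hJ.2.2.2.2.2

lemma KernelCond.intervalIntegral_comp_sub_left_le_one {J : ℝ → ℝ} (hJ : KernelCond J)
    {a b : ℝ} (hab : a ≤ b) (x : ℝ) : ∫ y in a..b, J (x - y) ≤ 1 := by
  rw [intervalIntegral.integral_of_le hab]
  calc ∫ y in Ioc a b, J (x - y)
      ≤ ∫ y, J (x - y) :=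
        setIntegral_le_integral (hJ.integrable.comp_sub_left x) (.of_forall fun _ => hJ.2.2.1 _)
    _ = 1 := by rw [integral_sub_left_eq_self J volume x, hJ.2.2.2.2.2]

lemma KernelCond.le_intervalIntegral_mul {J : ℝ → ℝ} (hJ : KernelCond J) {u : ℝ → ℝ}
    {a b m : ℝ} (hab : a ≤ b) (hu : ContinuousOn u (Icc a b)) (hm : m ≤ 0)
    (hmu : ∀ y ∈ Icc a b, m ≤ u y) (x : ℝ) : m ≤ ∫ y in a..b, J (x - y) * u y := by
  have hJx : Continuous fun y => J (x - y) := hJ.1.comp (continuous_sub_left x)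
  calc m ≤ (∫ y in a..b, J (x - y)) * m :=
        le_mul_of_le_one_left hm (hJ.intervalIntegral_comp_sub_left_le_one hab x)
    _ = ∫ y in a..b, J (x - y) * m := (intervalIntegral.integral_mul_const m _).symm
    _ ≤ ∫ y in a..b, J (x - y) * u y := by
        refine intervalIntegral.integral_mono_on hab
          ((hJx.mul continuous_const).intervalIntegrable _ _)
          ((hJx.continuousOn.mul hu).intervalIntegrable_of_Icc hab)
          fun y hy => mul_le_mul_of_nonneg_left (hmu y hy) (hJ.2.2.1 _)

lemma IsMinOn.hasDerivWithinAt_nonpos_of_right {f : ℝ → ℝ} {f' a b : ℝ} (hab : a < b)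
    (hmin : IsMinOn f (Icc a b) b) (hf : HasDerivWithinAt f f' (Icc a b) b) : f' ≤ 0 := by
  have hcone : a - b ∈ posTangentConeAt (Icc a b) b :=
    sub_mem_posTangentConeAt_of_segment_subset
      ((convex_Icc a b).segment_subset (right_mem_Icc.2 hab.le) (left_mem_Icc.2 hab.le))
  have := hmin.localize.hasFDerivWithinAt_nonneg hf.hasFDerivWithinAt hcone
  simp only [ContinuousLinearMap.toSpanSingleton_apply, smul_eq_mul] at this
  exact nonpos_of_mul_nonneg_right this (sub_neg.2 hab)

lemma IsMinOn.hasDerivWithinAt_le_mul_of_exp_weight {f : ℝ → ℝ} {f' K a b : ℝ} (hab : a < b)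
    (hmin : IsMinOn (fun s => exp (-(K * s)) * f s) (Icc a b) b)
    (hf : HasDerivWithinAt f f' (Icc a b) b) : f' ≤ K * f b := by
  have hweight : HasDerivWithinAt (fun s => exp (-(K * s)) * f s)
      (exp (-(K * b)) * (f' - K * f b)) (Icc a b) b := by
    have hexp : HasDerivAt (fun s => exp (-(K * s))) (exp (-(K * b)) * -K) b :=
      (((hasDerivAt_id b).const_mul K).neg.congr_deriv (by ring)).exp
    exact (HasDerivWithinAt.mul hexp.hasDerivWithinAt hf).congr_deriv (by ring)
  have := hmin.hasDerivWithinAt_nonpos_of_right hab hweight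
  nlinarith [exp_pos (-(K * b))]

lemma nonneg_of_exp_weighted_min {J : ℝ → ℝ} (hJ : KernelCond J) {d K a c L₁ L₂ T t₀ x₀ ut : ℝ}
    (hd : 0 ≤ d) (hc : 0 ≤ c) {u v : ℝ → ℝ → ℝ}
    (ht₀ : t₀ ∈ Ioc 0 T) (hx₀ : x₀ ∈ Icc L₁ L₂) (hu : ContinuousOn (u t₀) (Icc L₁ L₂))
    (hmin : ∀ p ∈ Icc 0 T ×ˢ Icc L₁ L₂,
      exp (-(K * t₀)) * u t₀ x₀ ≤ exp (-(K * p.1)) * min (u p.1 p.2) (v p.1 p.2))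
    (hderiv : HasDerivWithinAt (fun s => u s x₀) ut (Icc 0 T) t₀)
    (hineq : d * ((∫ y in L₁..L₂, J (x₀ - y) * u t₀ y) - u t₀ x₀)
      + a * u t₀ x₀ + c * v t₀ x₀ ≤ ut) (hK : a + c < K) :
    0 ≤ u t₀ x₀ := by
  have ht₀' : t₀ ∈ Icc 0 T := Ioc_subset_Icc_self ht₀
  have hmin_u : ∀ t ∈ Icc 0 T, ∀ x ∈ Icc L₁ L₂,
      exp (-(K * t₀)) * u t₀ x₀ ≤ exp (-(K * t)) * u t x := fun t ht x hx =>
    (hmin (t, x) ⟨ht, hx⟩).trans (mul_le_mul_of_nonneg_left (min_le_left _ _) (exp_pos _).le)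
  have huv : u t₀ x₀ ≤ v t₀ x₀ := by
    have := (hmin (t₀, x₀) ⟨ht₀', hx₀⟩).trans
      (mul_le_mul_of_nonneg_left (min_le_right _ _) (exp_pos _).le)
    exact (mul_le_mul_iff_right₀ (exp_pos _)).1 this
  have hspace : ∀ y ∈ Icc L₁ L₂, u t₀ x₀ ≤ u t₀ y := fun y hy =>
    (mul_le_mul_iff_right₀ (exp_pos _)).1 (hmin_u t₀ ht₀' y hy)
  have htime : ut ≤ K * u t₀ x₀ :=
    IsMinOn.hasDerivWithinAt_le_mul_of_exp_weight (f := fun s => u s x₀) ht₀.1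
      (fun t ht => hmin_u t ⟨ht.1, ht.2.trans ht₀.2⟩ x₀ hx₀)
      (hderiv.mono (Icc_subset_Icc_right ht₀.2))
  by_contra! hneg
  have hdiffusion : u t₀ x₀ ≤ ∫ y in L₁..L₂, J (x₀ - y) * u t₀ y :=
    hJ.le_intervalIntegral_mul (hx₀.1.trans hx₀.2) hu hneg.le hspace x₀
  nlinarith [mul_nonneg hd (sub_nonneg.2 hdiffusion), mul_le_mul_of_nonneg_left huv hc,
    mul_pos_of_neg_of_neg (sub_neg.2 hK) hneg]

theorem comparison_fixed_domain_general
    (J₁ J₂ : ℝ → ℝ) (hJ₁ : KernelCond J₁) (hJ₂ : KernelCond J₂)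
    (d₁ d₂ h₀ T : ℝ) (hd₁ : 0 < d₁) (hd₂ : 0 < d₂)
    (A B C D : ℝ → ℝ → ℝ)
    (hbdd : ∃ M : ℝ, ∀ t ∈ Icc 0 T, ∀ x ∈ Icc (-h₀) h₀,
      |A t x| ≤ M ∧ |B t x| ≤ M ∧ |C t x| ≤ M ∧ |D t x| ≤ M)
    (hB : ∀ t ∈ Icc 0 T, ∀ x ∈ Icc (-h₀) h₀, 0 ≤ B t x)
    (hC : ∀ t ∈ Icc 0 T, ∀ x ∈ Icc (-h₀) h₀, 0 ≤ C t x)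
    (u v ut vt : ℝ → ℝ → ℝ)
    (hu : ContinuousOn (fun p : ℝ × ℝ => u p.1 p.2) (Icc 0 T ×ˢ Icc (-h₀) h₀))
    (hv : ContinuousOn (fun p : ℝ × ℝ => v p.1 p.2) (Icc 0 T ×ˢ Icc (-h₀) h₀))
    (hderiv : ∀ t ∈ Ioc 0 T, ∀ x ∈ Icc (-h₀) h₀,
      HasDerivWithinAt (fun s => u s x) (ut t x) (Icc 0 T) t ∧
      HasDerivWithinAt (fun s => v s x) (vt t x) (Icc 0 T) t)
    (hineq : ∀ t ∈ Ioc 0 T, ∀ x ∈ Icc (-h₀) h₀,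
      d₁ * ((∫ y in (-h₀)..h₀, J₁ (x - y) * u t y) - u t x)
        + A t x * u t x + B t x * v t x ≤ ut t x ∧
      d₂ * ((∫ y in (-h₀)..h₀, J₂ (x - y) * v t y) - v t x)
        + D t x * v t x + C t x * u t x ≤ vt t x)
    (hinit : ∀ x ∈ Icc (-h₀) h₀, 0 ≤ u 0 x ∧ 0 ≤ v 0 x) :
    ∀ t ∈ Ioc 0 T, ∀ x ∈ Icc (-h₀) h₀, 0 ≤ u t x ∧ 0 ≤ v t x := by
  obtain ⟨M, hM⟩ := hbdd
  set K := 2 * M + 1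
  by_contra! hneg
  obtain ⟨t₁, ht₁, x₁, hx₁, hneg₁⟩ := hneg
  have hp₁ : (t₁, x₁) ∈ Icc 0 T ×ˢ Icc (-h₀) h₀ := ⟨Ioc_subset_Icc_self ht₁, hx₁⟩
  have hw : ContinuousOn (fun p : ℝ × ℝ => exp (-(K * p.1)) * min (u p.1 p.2) (v p.1 p.2))
      (Icc 0 T ×ˢ Icc (-h₀) h₀) :=
    (by fun_prop : Continuous fun p : ℝ × ℝ => exp (-(K * p.1))).continuousOn.mul (hu.inf hv)
  obtain ⟨⟨t₀, x₀⟩, ⟨ht₀, hx₀⟩, hmin⟩ :=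
    (isCompact_Icc.prod isCompact_Icc).exists_isMinOn ⟨_, hp₁⟩ hw
  have hmin_neg : exp (-(K * t₀)) * min (u t₀ x₀) (v t₀ x₀) < 0 :=
    (hmin hp₁).trans_lt <| mul_neg_of_pos_of_neg (exp_pos _) <|
      min_lt_iff.2 ((lt_or_ge (u t₁ x₁) 0).imp_right hneg₁)
  have ht₀_pos : 0 < t₀ := by
    refine ht₀.1.lt_of_ne fun h => hmin_neg.not_ge ?_
    subst h
    exact mul_nonneg (exp_pos _).le (le_min (hinit x₀ hx₀).1 (hinit x₀ hx₀).2)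
  have ht₀' : t₀ ∈ Ioc 0 T := ⟨ht₀_pos, ht₀.2⟩
  obtain ⟨hA, hBM, hCM, hDM⟩ := hM t₀ ht₀ x₀ hx₀
  rcases min_choice (u t₀ x₀) (v t₀ x₀) with h | h <;> rw [h] at hmin_neg <;>
    refine hmin_neg.not_ge (mul_nonneg (exp_pos _).le ?_)
  · exact nonneg_of_exp_weighted_min hJ₁ hd₁.le (hB t₀ ht₀ x₀ hx₀) ht₀' hx₀
      (hu.uncurry_left t₀ ht₀) (fun p hp => by rw [← h]; exact hmin hp)
      (hderiv t₀ ht₀' x₀ hx₀).1 (hineq t₀ ht₀' x₀ hx₀).1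
      (by linarith [abs_le.1 hA, abs_le.1 hBM])
  · exact nonneg_of_exp_weighted_min hJ₂ hd₂.le (hC t₀ ht₀ x₀ hx₀) ht₀' hx₀
      (hv.uncurry_left t₀ ht₀) (fun p hp => by rw [← h, min_comm (v p.1 p.2)]; exact hmin hp)
      (hderiv t₀ ht₀' x₀ hx₀).2 (hineq t₀ ht₀' x₀ hx₀).2
      (by linarith [abs_le.1 hDM, abs_le.1 hCM])

/-- comparison lemma on a fixed domain. -/
theorem comparison_fixed_domain
    (J₁ J₂ : ℝ → ℝ) (hJ₁ : KernelCond J₁) (hJ₂ : KernelCond J₂)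
    (d₁ d₂ h₀ T : ℝ) (hd₁ : 0 < d₁) (hd₂ : 0 < d₂) (hh₀ : 0 < h₀) (hT : 0 < T)
    (A B C D : ℝ → ℝ → ℝ)
    (hbdd : ∃ M : ℝ, ∀ t ∈ Icc 0 T, ∀ x ∈ Icc (-h₀) h₀,
      |A t x| ≤ M ∧ |B t x| ≤ M ∧ |C t x| ≤ M ∧ |D t x| ≤ M)
    (hB : ∀ t ∈ Icc 0 T, ∀ x ∈ Icc (-h₀) h₀, 0 ≤ B t x)
    (hC : ∀ t ∈ Icc 0 T, ∀ x ∈ Icc (-h₀) h₀, 0 ≤ C t x)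
    (u v ut vt : ℝ → ℝ → ℝ)
    (hu : ContinuousOn (fun p : ℝ × ℝ => u p.1 p.2) (Icc 0 T ×ˢ Icc (-h₀) h₀))
    (hv : ContinuousOn (fun p : ℝ × ℝ => v p.1 p.2) (Icc 0 T ×ˢ Icc (-h₀) h₀))
    (hutc : ContinuousOn (fun p : ℝ × ℝ => ut p.1 p.2) (Icc 0 T ×ˢ Icc (-h₀) h₀))
    (hvtc : ContinuousOn (fun p : ℝ × ℝ => vt p.1 p.2) (Icc 0 T ×ˢ Icc (-h₀) h₀))
    (hderiv : ∀ t ∈ Ioc 0 T, ∀ x ∈ Icc (-h₀) h₀,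
      HasDerivWithinAt (fun s => u s x) (ut t x) (Icc 0 T) t ∧
      HasDerivWithinAt (fun s => v s x) (vt t x) (Icc 0 T) t)
    (hineq : ∀ t ∈ Ioc 0 T, ∀ x ∈ Icc (-h₀) h₀,
      d₁ * ((∫ y in (-h₀)..h₀, J₁ (x - y) * u t y) - u t x)
        + A t x * u t x + B t x * v t x ≤ ut t x ∧
      d₂ * ((∫ y in (-h₀)..h₀, J₂ (x - y) * v t y) - v t x)
        + D t x * v t x + C t x * u t x ≤ vt t x)
    (hinit : ∀ x ∈ Icc (-h₀) h₀, 0 ≤ u 0 x ∧ 0 ≤ v 0 x) :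
    ∀ t ∈ Ioc 0 T, ∀ x ∈ Icc (-h₀) h₀, 0 ≤ u t x ∧ 0 ≤ v t x :=
  comparison_fixed_domain_general J₁ J₂ hJ₁ hJ₂ d₁ d₂ h₀ T hd₁ hd₂ A B C D hbdd hB hC u v ut vt hu
    hv hderiv hineq hinit

end
end

section
/- Assume J₁, J₂ satisfy condition (J), d₁, d₂ > 0, and A = (a_ij) is a real 2×2 matrix with a₁₂ = a₂₁ > 0; let λ_p denote the principal eigenvalue of Mφ + λφ = 0 on [L₁, L₂]. (a) If there exists a continuous pair φ̃ = (φ̃₁, φ̃₂) on [L₁, L₂] with φ̃₁ ≥ 0, φ̃₂ ≥ 0, neither identically zero, and a constant λ̃ such that (Mφ̃)(x) + λ̃φ̃(x) ≤ 0 componentwise on [L₁, L₂], then λ_p ≥ λ̃; moreover λ_p = λ̃ only if equality holds in both components on [L₁, L₂]. (b) If instead (Mφ̃)(x) + λ̃φ̃(x) ≥ 0 componentwise on [L₁, L₂], then λ_p ≤ λ̃, with λ_p = λ̃ only if equality holds. -/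
open MeasureTheory Set Filter

noncomputable section

/-! Pair the inequality `Mφ̃ + λ̃φ̃ ≤ 0` (or `≥ 0`) with the positive principal eigenfunction
`φ`. Since the kernels are even and `a₁₂ = a₂₁`, `M` is symmetric, so
`⟨Mφ̃ + λ̃φ̃, φ⟩ = ⟨φ̃, Mφ + λ̃φ⟩ = (λ̃ - λ_p) ⟨φ̃, φ⟩` with `⟨φ̃, φ⟩ > 0`, and the sign of the
left-hand side gives the comparison. In the equality case the continuous integrand
`(Mφ̃ + λ̃φ̃) · φ` has one sign and integral zero, so it vanishes, and `φ > 0` forces equality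
in each component. -/

section IntervalIntegral

variable {a b : ℝ}

theorem ContinuousOn.continuous_intervalIntegral_kernel_mul {k : ℝ → ℝ → ℝ} {f : ℝ → ℝ}
    (hk : Continuous (Function.uncurry k)) (hab : a ≤ b) (hf : ContinuousOn f (Icc a b)) :
    Continuous fun x => ∫ y in a..b, k x y * f y := by
  set F := IccExtend hab ((Icc a b).domRestrict f)
  have hF : Continuous F := hf.domRestrict.Icc_extend'
  have hfF : ∀ x, (∫ y in a..b, k x y * f y) = ∫ y in a..b, k x y * F y := fun x =>
    intervalIntegral.integral_congr fun y hy => by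
      rw [uIcc_of_le hab] at hy
      simp [F, IccExtend_of_mem _ _ hy]
  simp_rw [hfF]
  exact intervalIntegral.continuous_parametric_intervalIntegral_of_continuous' (by fun_prop) a b

theorem intervalIntegral_kernel_mul_comm {k : ℝ → ℝ → ℝ} {f g : ℝ → ℝ}
    (hk : ContinuousOn (Function.uncurry k) (Icc a b ×ˢ Icc a b)) (hsymm : ∀ x y, k x y = k y x)
    (hab : a ≤ b) (hf : ContinuousOn f (Icc a b)) (hg : ContinuousOn g (Icc a b)) :
    ∫ x in a..b, (∫ y in a..b, k x y * f y) * g x =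
      ∫ x in a..b, (∫ y in a..b, k x y * g y) * f x := by
  have hint : Integrable (Function.uncurry fun x y => k x y * f y * g x)
      ((volume.restrict (Ioc a b)).prod (volume.restrict (Ioc a b))) := by
    rw [Measure.prod_restrict, ← Measure.volume_eq_prod]
    have hc : ContinuousOn (Function.uncurry fun x y => k x y * f y * g x) (Icc a b ×ˢ Icc a b) :=
      (hk.mul (hf.comp continuousOn_snd fun z hz => hz.2)).mul
        (hg.comp continuousOn_fst fun z hz => hz.1)
    exact (hc.integrableOn_compact (isCompact_Icc.prod isCompact_Icc)).mono_set
      (prod_mono Ioc_subset_Icc_self Ioc_subset_Icc_self)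
  simp only [intervalIntegral.integral_of_le hab, ← integral_mul_const]
  rw [integral_integral_swap hint]
  simp_rw [hsymm _ _, mul_right_comm _ (f _)]

theorem eqOn_zero_of_intervalIntegral_eq_zero {f : ℝ → ℝ} (hab : a < b)
    (hf : ContinuousOn f (Icc a b)) (hf₀ : ∀ x ∈ Icc a b, 0 ≤ f x)
    (h : ∫ x in a..b, f x = 0) : EqOn f 0 (Icc a b) := by
  intro x hx
  by_contra hne
  have hpos : 0 < ∫ x in a..b, f x :=
    intervalIntegral.integral_pos hab hf (fun y hy => hf₀ y (Ioc_subset_Icc_self hy))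
      ⟨x, hx, (hf₀ x hx).lt_of_ne' hne⟩
  exact hpos.ne' h

theorem intervalIntegral_mul_add_mul_pos {f₁ f₂ φ₁ φ₂ : ℝ → ℝ} (hab : a < b)
    (hf₁ : ContinuousOn f₁ (Icc a b)) (hf₂ : ContinuousOn f₂ (Icc a b))
    (hφ₁ : ContinuousOn φ₁ (Icc a b)) (hφ₂ : ContinuousOn φ₂ (Icc a b))
    (hf : ∀ x ∈ Icc a b, 0 ≤ f₁ x ∧ 0 ≤ f₂ x) (hφ : ∀ x ∈ Icc a b, 0 < φ₁ x ∧ 0 < φ₂ x)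
    (hne : ¬ ∀ x ∈ Icc a b, f₁ x = 0) :
    0 < ∫ x in a..b, (f₁ x * φ₁ x + f₂ x * φ₂ x) := by
  have hterm : ∀ x ∈ Icc a b, f₁ x * φ₁ x ≤ f₁ x * φ₁ x + f₂ x * φ₂ x ∧
      0 ≤ f₁ x * φ₁ x := fun x hx =>
    ⟨le_add_of_nonneg_right (mul_nonneg (hf x hx).2 (hφ x hx).2.le),
      mul_nonneg (hf x hx).1 (hφ x hx).1.le⟩
  obtain ⟨c, hc, hfc⟩ := not_forall₂.mp hne
  refine intervalIntegral.integral_pos hab ((hf₁.mul hφ₁).add (hf₂.mul hφ₂))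
    (fun x hx => (hterm x <| Ioc_subset_Icc_self hx).2.trans (hterm x <| Ioc_subset_Icc_self hx).1)
    ⟨c, hc, lt_of_lt_of_le ?_ (hterm c hc).1⟩
  exact mul_pos ((hf c hc).1.lt_of_ne' hfc) (hφ c hc).1

theorem le_and_eq_zero_of_intervalIntegral_eq_of_nonneg {r₁ r₂ φ₁ φ₂ : ℝ → ℝ} {P lam lam' : ℝ}
    (hab : a < b) (hr₁ : ContinuousOn r₁ (Icc a b)) (hr₂ : ContinuousOn r₂ (Icc a b))
    (hφ₁ : ContinuousOn φ₁ (Icc a b)) (hφ₂ : ContinuousOn φ₂ (Icc a b))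
    (hφ : ∀ x ∈ Icc a b, 0 < φ₁ x ∧ 0 < φ₂ x) (hP : 0 < P)
    (h : ∫ x in a..b, (r₁ x * φ₁ x + r₂ x * φ₂ x) = (lam - lam') * P)
    (hr : ∀ x ∈ Icc a b, 0 ≤ r₁ x ∧ 0 ≤ r₂ x) :
    lam' ≤ lam ∧ (lam' = lam → ∀ x ∈ Icc a b, r₁ x = 0 ∧ r₂ x = 0) := by
  have hterm : ∀ x ∈ Icc a b, 0 ≤ r₁ x * φ₁ x ∧ 0 ≤ r₂ x * φ₂ x := fun x hx =>
    ⟨mul_nonneg (hr x hx).1 (hφ x hx).1.le, mul_nonneg (hr x hx).2 (hφ x hx).2.le⟩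
  have hsum : ∀ x ∈ Icc a b, 0 ≤ r₁ x * φ₁ x + r₂ x * φ₂ x := fun x hx =>
    add_nonneg (hterm x hx).1 (hterm x hx).2
  have hint : 0 ≤ (lam - lam') * P := h ▸ intervalIntegral.integral_nonneg hab.le hsum
  refine ⟨sub_nonneg.mp (nonneg_of_mul_nonneg_left hint hP), fun heq x hx => ?_⟩
  rw [heq, sub_self, zero_mul] at h
  have hzero : r₁ x * φ₁ x + r₂ x * φ₂ x = 0 := eqOn_zero_of_intervalIntegral_eq_zero hab
    ((hr₁.mul hφ₁).add (hr₂.mul hφ₂)) hsum h hx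
  have h₁ : r₁ x * φ₁ x = 0 := by linarith [(hterm x hx).1, (hterm x hx).2, hzero]
  have h₂ : r₂ x * φ₂ x = 0 := by linarith [(hterm x hx).1, (hterm x hx).2, hzero]
  exact ⟨(mul_eq_zero.mp h₁).resolve_right (hφ x hx).1.ne',
    (mul_eq_zero.mp h₂).resolve_right (hφ x hx).2.ne'⟩

theorem le_and_eq_zero_of_intervalIntegral_eq_of_nonpos {r₁ r₂ φ₁ φ₂ : ℝ → ℝ} {P lam lam' : ℝ}
    (hab : a < b) (hr₁ : ContinuousOn r₁ (Icc a b)) (hr₂ : ContinuousOn r₂ (Icc a b))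
    (hφ₁ : ContinuousOn φ₁ (Icc a b)) (hφ₂ : ContinuousOn φ₂ (Icc a b))
    (hφ : ∀ x ∈ Icc a b, 0 < φ₁ x ∧ 0 < φ₂ x) (hP : 0 < P)
    (h : ∫ x in a..b, (r₁ x * φ₁ x + r₂ x * φ₂ x) = (lam - lam') * P)
    (hr : ∀ x ∈ Icc a b, r₁ x ≤ 0 ∧ r₂ x ≤ 0) :
    lam ≤ lam' ∧ (lam' = lam → ∀ x ∈ Icc a b, r₁ x = 0 ∧ r₂ x = 0) := by
  have hneg : ∫ x in a..b, (-r₁ x * φ₁ x + -r₂ x * φ₂ x) = (lam' - lam) * P := by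
    simp only [neg_mul, ← neg_add, intervalIntegral.integral_neg, h]
    ring
  obtain ⟨hle, heq⟩ := le_and_eq_zero_of_intervalIntegral_eq_of_nonneg hab hr₁.neg hr₂.neg
    hφ₁ hφ₂ hφ hP hneg fun x hx => ⟨neg_nonneg.mpr (hr x hx).1, neg_nonneg.mpr (hr x hx).2⟩
  exact ⟨hle, fun h x hx => by simpa using heq h.symm x hx⟩

end IntervalIntegral

section NonlocalSystem

variable {J J₁ J₂ : ℝ → ℝ} {L₁ L₂ : ℝ}

theorem continuousOn_intervalIntegral_kernel_sub_mul {f : ℝ → ℝ} (hJ : Continuous J)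
    (hL : L₁ ≤ L₂) (hf : ContinuousOn f (Icc L₁ L₂)) :
    ContinuousOn (fun x => ∫ y in L₁..L₂, J (x - y) * f y) (Icc L₁ L₂) :=
  (hf.continuous_intervalIntegral_kernel_mul (k := fun x y => J (x - y))
    (by fun_prop) hL).continuousOn

theorem continuousOn_nonlocal_residual {f g h : ℝ → ℝ} {d c₁ c₂ lam : ℝ} (hJ : Continuous J) (hL : L₁ ≤ L₂)
    (hf : ContinuousOn f (Icc L₁ L₂)) (hg : ContinuousOn g (Icc L₁ L₂))
    (hh : ContinuousOn h (Icc L₁ L₂)) :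
    ContinuousOn (fun x => d * ((∫ y in L₁..L₂, J (x - y) * f y) - f x) + c₁ * g x + c₂ * h x
      + lam * f x) (Icc L₁ L₂) := by
  have hK := continuousOn_intervalIntegral_kernel_sub_mul hJ hL hf
  fun_prop

theorem intervalIntegral_even_kernel_mul_comm {f g : ℝ → ℝ} (hJ : Continuous J)
    (hJe : Function.Even J) (hL : L₁ ≤ L₂)
    (hf : ContinuousOn f (Icc L₁ L₂)) (hg : ContinuousOn g (Icc L₁ L₂)) :
    ∫ x in L₁..L₂, (∫ y in L₁..L₂, J (x - y) * f y) * g x =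
      ∫ x in L₁..L₂, (∫ y in L₁..L₂, J (x - y) * g y) * f x :=
  intervalIntegral_kernel_mul_comm (k := fun x y => J (x - y)) (by fun_prop)
    (fun x y => by rw [← neg_sub, hJe]) hL hf hg

theorem intervalIntegral_residual_mul_eigenfunction {d₁ d₂ a11 a12 a21 a22 lamP : ℝ}
    {φ₁ φ₂ f₁ f₂ : ℝ → ℝ} (hJ₁ : Continuous J₁) (hJ₁e : Function.Even J₁)
    (hJ₂ : Continuous J₂) (hJ₂e : Function.Even J₂) (hL : L₁ ≤ L₂) (hsym : a12 = a21)
    (hφ₁ : ContinuousOn φ₁ (Icc L₁ L₂)) (hφ₂ : ContinuousOn φ₂ (Icc L₁ L₂))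
    (heig : ∀ x ∈ Icc L₁ L₂,
      d₁ * ((∫ y in L₁..L₂, J₁ (x - y) * φ₁ y) - φ₁ x) + a11 * φ₁ x + a12 * φ₂ x
        + lamP * φ₁ x = 0 ∧
      d₂ * ((∫ y in L₁..L₂, J₂ (x - y) * φ₂ y) - φ₂ x) + a21 * φ₁ x + a22 * φ₂ x
        + lamP * φ₂ x = 0)
    (hf₁ : ContinuousOn f₁ (Icc L₁ L₂)) (hf₂ : ContinuousOn f₂ (Icc L₁ L₂)) (lam : ℝ) :
    ∫ x in L₁..L₂,
      ((d₁ * ((∫ y in L₁..L₂, J₁ (x - y) * f₁ y) - f₁ x) + a11 * f₁ x + a12 * f₂ x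
          + lam * f₁ x) * φ₁ x +
        (d₂ * ((∫ y in L₁..L₂, J₂ (x - y) * f₂ y) - f₂ x) + a21 * f₁ x + a22 * f₂ x
          + lam * f₂ x) * φ₂ x) =
      (lam - lamP) * ∫ x in L₁..L₂, (f₁ x * φ₁ x + f₂ x * φ₂ x) := by
  subst hsym
  set K₁ := fun (f : ℝ → ℝ) x => ∫ y in L₁..L₂, J₁ (x - y) * f y
  set K₂ := fun (f : ℝ → ℝ) x => ∫ y in L₁..L₂, J₂ (x - y) * f y
  have hK₁f₁ : ContinuousOn (K₁ f₁) (Icc L₁ L₂) :=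
    continuousOn_intervalIntegral_kernel_sub_mul hJ₁ hL hf₁
  have hK₁φ₁ : ContinuousOn (K₁ φ₁) (Icc L₁ L₂) :=
    continuousOn_intervalIntegral_kernel_sub_mul hJ₁ hL hφ₁
  have hK₂f₂ : ContinuousOn (K₂ f₂) (Icc L₁ L₂) :=
    continuousOn_intervalIntegral_kernel_sub_mul hJ₂ hL hf₂
  have hK₂φ₂ : ContinuousOn (K₂ φ₂) (Icc L₁ L₂) :=
    continuousOn_intervalIntegral_kernel_sub_mul hJ₂ hL hφ₂
  have hI : ∀ {u : ℝ → ℝ}, ContinuousOn u (Icc L₁ L₂) → IntervalIntegrable u volume L₁ L₂ :=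
    fun hu => hu.intervalIntegrable_of_Icc hL
  have hpt : EqOn
      (fun x => (d₁ * (K₁ f₁ x - f₁ x) + a11 * f₁ x + a12 * f₂ x + lam * f₁ x) * φ₁ x +
        (d₂ * (K₂ f₂ x - f₂ x) + a12 * f₁ x + a22 * f₂ x + lam * f₂ x) * φ₂ x)
      (fun x => d₁ * (K₁ f₁ x * φ₁ x - K₁ φ₁ x * f₁ x) + d₂ * (K₂ f₂ x * φ₂ x - K₂ φ₂ x * f₂ x)
        + (lam - lamP) * (f₁ x * φ₁ x + f₂ x * φ₂ x)) (uIcc L₁ L₂) := by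
    intro x hx
    rw [uIcc_of_le hL] at hx
    linear_combination f₁ x * (heig x hx).1 + f₂ x * (heig x hx).2
  rw [intervalIntegral.integral_congr hpt, intervalIntegral.integral_add,
    intervalIntegral.integral_add, intervalIntegral.integral_const_mul,
    intervalIntegral.integral_const_mul, intervalIntegral.integral_const_mul,
    intervalIntegral.integral_sub, intervalIntegral.integral_sub,
    intervalIntegral_even_kernel_mul_comm hJ₁ hJ₁e hL hf₁ hφ₁,
    intervalIntegral_even_kernel_mul_comm hJ₂ hJ₂e hL hf₂ hφ₂]
  · ring
  all_goals exact hI (by fun_prop)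

end NonlocalSystem

theorem principal_eigenvalue_sub_super_comparison_general
    (J₁ J₂ : ℝ → ℝ) (hJ₁ : KernelCond J₁) (hJ₂ : KernelCond J₂)
    (d₁ d₂ L₁ L₂ a11 a12 a21 a22 lamP : ℝ)
    (hL : L₁ < L₂)
    (hsym : a12 = a21)
    (hp : IsPrincipalEV J₁ J₂ d₁ d₂ L₁ L₂ a11 a12 a21 a22 lamP) :
    -- (a) supersolution inequality `Mφ̃ + λ̃φ̃ ≤ 0` forces `λ_p ≥ λ̃`
    (∀ φt₁ φt₂ : ℝ → ℝ, ∀ lamT : ℝ,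
      ContinuousOn φt₁ (Icc L₁ L₂) → ContinuousOn φt₂ (Icc L₁ L₂) →
      (∀ x ∈ Icc L₁ L₂, 0 ≤ φt₁ x ∧ 0 ≤ φt₂ x) →
      (¬ ∀ x ∈ Icc L₁ L₂, φt₁ x = 0) → (¬ ∀ x ∈ Icc L₁ L₂, φt₂ x = 0) →
      (∀ x ∈ Icc L₁ L₂,
        d₁ * ((∫ y in L₁..L₂, J₁ (x - y) * φt₁ y) - φt₁ x) + a11 * φt₁ x
          + a12 * φt₂ x + lamT * φt₁ x ≤ 0 ∧
        d₂ * ((∫ y in L₁..L₂, J₂ (x - y) * φt₂ y) - φt₂ x) + a21 * φt₁ x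
          + a22 * φt₂ x + lamT * φt₂ x ≤ 0) →
      lamT ≤ lamP ∧
        (lamP = lamT → ∀ x ∈ Icc L₁ L₂,
          d₁ * ((∫ y in L₁..L₂, J₁ (x - y) * φt₁ y) - φt₁ x) + a11 * φt₁ x
            + a12 * φt₂ x + lamT * φt₁ x = 0 ∧
          d₂ * ((∫ y in L₁..L₂, J₂ (x - y) * φt₂ y) - φt₂ x) + a21 * φt₁ x
            + a22 * φt₂ x + lamT * φt₂ x = 0)) ∧
    -- (b) subsolution inequality `Mφ̃ + λ̃φ̃ ≥ 0` forces `λ_p ≤ λ̃`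
    (∀ φt₁ φt₂ : ℝ → ℝ, ∀ lamT : ℝ,
      ContinuousOn φt₁ (Icc L₁ L₂) → ContinuousOn φt₂ (Icc L₁ L₂) →
      (∀ x ∈ Icc L₁ L₂, 0 ≤ φt₁ x ∧ 0 ≤ φt₂ x) →
      (¬ ∀ x ∈ Icc L₁ L₂, φt₁ x = 0) → (¬ ∀ x ∈ Icc L₁ L₂, φt₂ x = 0) →
      (∀ x ∈ Icc L₁ L₂,
        0 ≤ d₁ * ((∫ y in L₁..L₂, J₁ (x - y) * φt₁ y) - φt₁ x) + a11 * φt₁ x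
          + a12 * φt₂ x + lamT * φt₁ x ∧
        0 ≤ d₂ * ((∫ y in L₁..L₂, J₂ (x - y) * φt₂ y) - φt₂ x) + a21 * φt₁ x
          + a22 * φt₂ x + lamT * φt₂ x) →
      lamP ≤ lamT ∧
        (lamP = lamT → ∀ x ∈ Icc L₁ L₂,
          d₁ * ((∫ y in L₁..L₂, J₁ (x - y) * φt₁ y) - φt₁ x) + a11 * φt₁ x
            + a12 * φt₂ x + lamT * φt₁ x = 0 ∧
          d₂ * ((∫ y in L₁..L₂, J₂ (x - y) * φt₂ y) - φt₂ x) + a21 * φt₁ x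
            + a22 * φt₂ x + lamT * φt₂ x = 0)) := by
  obtain ⟨hJ₁, -, -, hJ₁e, -, -⟩ := hJ₁
  obtain ⟨hJ₂, -, -, hJ₂e, -, -⟩ := hJ₂
  obtain ⟨φ₁, φ₂, hφ₁, hφ₂, hφ, heig⟩ := hp
  constructor
  · intro φt₁ φt₂ lamT ht₁ ht₂ hnn hne _ hsuper
    exact le_and_eq_zero_of_intervalIntegral_eq_of_nonpos hL
      (continuousOn_nonlocal_residual hJ₁ hL.le ht₁ ht₁ ht₂)
      (continuousOn_nonlocal_residual hJ₂ hL.le ht₂ ht₁ ht₂) hφ₁ hφ₂ hφ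
      (intervalIntegral_mul_add_mul_pos hL ht₁ ht₂ hφ₁ hφ₂ hnn hφ hne)
      (intervalIntegral_residual_mul_eigenfunction hJ₁ hJ₁e hJ₂ hJ₂e hL.le hsym hφ₁ hφ₂ heig
        ht₁ ht₂ lamT) hsuper
  · intro φt₁ φt₂ lamT ht₁ ht₂ hnn hne _ hsub
    exact le_and_eq_zero_of_intervalIntegral_eq_of_nonneg hL
      (continuousOn_nonlocal_residual hJ₁ hL.le ht₁ ht₁ ht₂)
      (continuousOn_nonlocal_residual hJ₂ hL.le ht₂ ht₁ ht₂) hφ₁ hφ₂ hφ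
      (intervalIntegral_mul_add_mul_pos hL ht₁ ht₂ hφ₁ hφ₂ hnn hφ hne)
      (intervalIntegral_residual_mul_eigenfunction hJ₁ hJ₁e hJ₂ hJ₂e hL.le hsym hφ₁ hφ₂ heig
        ht₁ ht₂ lamT) hsub

/-- sub/supersolution comparison with the principal eigenvalue. -/
theorem principal_eigenvalue_sub_super_comparison
    (J₁ J₂ : ℝ → ℝ) (hJ₁ : KernelCond J₁) (hJ₂ : KernelCond J₂)
    (d₁ d₂ L₁ L₂ a11 a12 a21 a22 lamP : ℝ)
    (hd₁ : 0 < d₁) (hd₂ : 0 < d₂) (hL : L₁ < L₂)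
    (hsym : a12 = a21) (ha12 : 0 < a12)
    (hp : IsPrincipalEV J₁ J₂ d₁ d₂ L₁ L₂ a11 a12 a21 a22 lamP) :
    -- (a) supersolution inequality `Mφ̃ + λ̃φ̃ ≤ 0` forces `λ_p ≥ λ̃`
    (∀ φt₁ φt₂ : ℝ → ℝ, ∀ lamT : ℝ,
      ContinuousOn φt₁ (Icc L₁ L₂) → ContinuousOn φt₂ (Icc L₁ L₂) →
      (∀ x ∈ Icc L₁ L₂, 0 ≤ φt₁ x ∧ 0 ≤ φt₂ x) →
      (¬ ∀ x ∈ Icc L₁ L₂, φt₁ x = 0) → (¬ ∀ x ∈ Icc L₁ L₂, φt₂ x = 0) →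
      (∀ x ∈ Icc L₁ L₂,
        d₁ * ((∫ y in L₁..L₂, J₁ (x - y) * φt₁ y) - φt₁ x) + a11 * φt₁ x
          + a12 * φt₂ x + lamT * φt₁ x ≤ 0 ∧
        d₂ * ((∫ y in L₁..L₂, J₂ (x - y) * φt₂ y) - φt₂ x) + a21 * φt₁ x
          + a22 * φt₂ x + lamT * φt₂ x ≤ 0) →
      lamT ≤ lamP ∧
        (lamP = lamT → ∀ x ∈ Icc L₁ L₂,
          d₁ * ((∫ y in L₁..L₂, J₁ (x - y) * φt₁ y) - φt₁ x) + a11 * φt₁ x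
            + a12 * φt₂ x + lamT * φt₁ x = 0 ∧
          d₂ * ((∫ y in L₁..L₂, J₂ (x - y) * φt₂ y) - φt₂ x) + a21 * φt₁ x
            + a22 * φt₂ x + lamT * φt₂ x = 0)) ∧
    -- (b) subsolution inequality `Mφ̃ + λ̃φ̃ ≥ 0` forces `λ_p ≤ λ̃`
    (∀ φt₁ φt₂ : ℝ → ℝ, ∀ lamT : ℝ,
      ContinuousOn φt₁ (Icc L₁ L₂) → ContinuousOn φt₂ (Icc L₁ L₂) →
      (∀ x ∈ Icc L₁ L₂, 0 ≤ φt₁ x ∧ 0 ≤ φt₂ x) →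
      (¬ ∀ x ∈ Icc L₁ L₂, φt₁ x = 0) → (¬ ∀ x ∈ Icc L₁ L₂, φt₂ x = 0) →
      (∀ x ∈ Icc L₁ L₂,
        0 ≤ d₁ * ((∫ y in L₁..L₂, J₁ (x - y) * φt₁ y) - φt₁ x) + a11 * φt₁ x
          + a12 * φt₂ x + lamT * φt₁ x ∧
        0 ≤ d₂ * ((∫ y in L₁..L₂, J₂ (x - y) * φt₂ y) - φt₂ x) + a21 * φt₁ x
          + a22 * φt₂ x + lamT * φt₂ x) →
      lamP ≤ lamT ∧
        (lamP = lamT → ∀ x ∈ Icc L₁ L₂,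
          d₁ * ((∫ y in L₁..L₂, J₁ (x - y) * φt₁ y) - φt₁ x) + a11 * φt₁ x
            + a12 * φt₂ x + lamT * φt₁ x = 0 ∧
          d₂ * ((∫ y in L₁..L₂, J₂ (x - y) * φt₂ y) - φt₂ x) + a21 * φt₁ x
            + a22 * φt₂ x + lamT * φt₂ x = 0)) :=
  principal_eigenvalue_sub_super_comparison_general J₁ J₂ hJ₁ hJ₂ d₁ d₂ L₁ L₂ a11 a12 a21 a22 lamP
    hL hsym hp

end
end

section
/- (Maximum principle for the nonlocal cooperative operator) Assume J₁, J₂ satisfy condition (J), d₁, d₂ > 0, and A = (a_ij) is a real 2×2 matrix with a₁₂ = a₂₁ > 0; let λ_p be the principal eigenvalue of Mφ + λφ = 0 on [L₁, L₂]. If λ_p ≥ 0, then every continuous pair φ = (φ₁, φ₂) on [L₁, L₂] satisfying (Mφ)(x) ≤ 0 componentwise for x ∈ (L₁, L₂), together with φ₁ ≥ 0 and φ₂ ≥ 0 at x = L₁ and at x = L₂, satisfies φ₁ ≥ 0 and φ₂ ≥ 0 on (L₁, L₂). -/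
open MeasureTheory Set Filter

noncomputable section

/-- If a nonnegative continuous function on `[a,b]` has nonpositive integral,
it vanishes identically on `[a,b]`. -/
lemma aux_integral_zero {f : ℝ → ℝ} {a b : ℝ} (hab : a < b)
    (hf : ContinuousOn f (Icc a b)) (hnn : ∀ y ∈ Icc a b, 0 ≤ f y)
    (hz : (∫ y in a..b, f y) ≤ 0) : ∀ y ∈ Icc a b, f y = 0 := by
  by_contra h
  push_neg at h
  obtain ⟨y₀, hy₀, hfy₀⟩ := h
  have hpos : 0 < f y₀ := lt_of_le_of_ne (hnn y₀ hy₀) (Ne.symm hfy₀)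
  -- δ-control from continuity
  have hc : ContinuousWithinAt f (Icc a b) y₀ := hf y₀ hy₀
  rw [Metric.continuousWithinAt_iff] at hc
  obtain ⟨δ, hδ, hδc⟩ := hc (f y₀ / 2) (by linarith)
  set c := max a (y₀ - δ / 2) with hc_def
  set d := min b (y₀ + δ / 2) with hd_def
  have hcd : c < d := by
    apply max_lt <;> apply lt_min
    · exact hab
    · linarith [hy₀.1]
    · linarith [hy₀.2]
    · linarith
  have hsub : Icc c d ⊆ Icc a b := Icc_subset_Icc (le_max_left _ _) (min_le_left _ _)
  have hball : ∀ y ∈ Icc c d, f y₀ / 2 ≤ f y := by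
    intro y hy
    have h1 : y₀ - δ / 2 ≤ y := le_trans (le_max_right _ _) hy.1
    have h2 : y ≤ y₀ + δ / 2 := le_trans hy.2 (min_le_right _ _)
    have hdist : dist y y₀ < δ := by
      rw [Real.dist_eq, abs_lt]; constructor <;> linarith
    have := hδc (hsub hy) hdist
    rw [Real.dist_eq, abs_lt] at this
    linarith [this.1]
  have hintab : IntervalIntegrable f volume a b :=
    (hf.mono (by rw [uIcc_of_le hab.le])).intervalIntegrable
  have hintac : IntervalIntegrable f volume a c := by
    apply ContinuousOn.intervalIntegrable
    apply hf.mono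
    rw [uIcc_of_le (le_max_left _ _)]
    exact Icc_subset_Icc le_rfl (le_trans (le_of_lt hcd) (min_le_left _ _))
  have hintcd : IntervalIntegrable f volume c d := by
    apply ContinuousOn.intervalIntegrable
    apply (hf.mono hsub).mono
    rw [uIcc_of_le hcd.le]
  have hintdb : IntervalIntegrable f volume d b := by
    apply ContinuousOn.intervalIntegrable
    apply hf.mono
    rw [uIcc_of_le (min_le_left _ _)]
    exact Icc_subset_Icc (le_trans (le_max_left _ _) hcd.le) le_rfl
  have hsplit : (∫ y in a..c, f y) + (∫ y in c..d, f y) + (∫ y in d..b, f y)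
      = ∫ y in a..b, f y := by
    rw [intervalIntegral.integral_add_adjacent_intervals hintac hintcd,
        intervalIntegral.integral_add_adjacent_intervals (hintac.trans hintcd) hintdb]
  have h1 : 0 ≤ ∫ y in a..c, f y := by
    apply intervalIntegral.integral_nonneg (le_max_left _ _)
    intro u hu
    exact hnn u ⟨hu.1, le_trans hu.2 (le_trans hcd.le (min_le_left _ _))⟩
  have h3 : 0 ≤ ∫ y in d..b, f y := by
    apply intervalIntegral.integral_nonneg (min_le_left _ _)
    intro u hu
    exact hnn u ⟨le_trans (le_trans (le_max_left _ _) hcd.le) hu.1, hu.2⟩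
  have h2 : (d - c) * f y₀ / 2 ≤ ∫ y in c..d, f y := by
    have := intervalIntegral.integral_mono_on hcd.le
      (intervalIntegrable_const (c := f y₀ / 2)) hintcd hball
    simpa using this
  have hdc : 0 < d - c := by linarith
  have : 0 < (d - c) * f y₀ / 2 := by positivity
  linarith

set_option maxHeartbeats 1000000 in
/-- maximum principle for the nonlocal cooperative operator. -/
theorem maximum_principle_nonlocal_operator
    (J₁ J₂ : ℝ → ℝ) (hJ₁ : KernelCond J₁) (hJ₂ : KernelCond J₂)
    (d₁ d₂ L₁ L₂ a11 a12 a21 a22 lamP : ℝ)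
    (hd₁ : 0 < d₁) (hd₂ : 0 < d₂) (hL : L₁ < L₂)
    (hsym : a12 = a21) (ha12 : 0 < a12)
    (hp : IsPrincipalEV J₁ J₂ d₁ d₂ L₁ L₂ a11 a12 a21 a22 lamP)
    (hlamP : 0 ≤ lamP)
    (φ₁ φ₂ : ℝ → ℝ)
    (hφ₁ : ContinuousOn φ₁ (Icc L₁ L₂)) (hφ₂ : ContinuousOn φ₂ (Icc L₁ L₂))
    (hM : ∀ x ∈ Ioo L₁ L₂,
      d₁ * ((∫ y in L₁..L₂, J₁ (x - y) * φ₁ y) - φ₁ x) + a11 * φ₁ x + a12 * φ₂ x ≤ 0 ∧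
      d₂ * ((∫ y in L₁..L₂, J₂ (x - y) * φ₂ y) - φ₂ x) + a21 * φ₁ x + a22 * φ₂ x ≤ 0)
    (hbdry : 0 ≤ φ₁ L₁ ∧ 0 ≤ φ₂ L₁ ∧ 0 ≤ φ₁ L₂ ∧ 0 ≤ φ₂ L₂) :
    ∀ x ∈ Ioo L₁ L₂, 0 ≤ φ₁ x ∧ 0 ≤ φ₂ x := by
  obtain ⟨ψ₁, ψ₂, hψ₁c, hψ₂c, hψpos, hψeq⟩ := hp
  set f : ℝ → ℝ := fun x => min (φ₁ x / ψ₁ x) (φ₂ x / ψ₂ x) with hf_def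
  have hfc : ContinuousOn f (Icc L₁ L₂) :=
    ContinuousOn.inf (hφ₁.div hψ₁c (fun x hx => (hψpos x hx).1.ne'))
      (hφ₂.div hψ₂c (fun x hx => (hψpos x hx).2.ne'))
  obtain ⟨x₀, hx₀mem, hx₀min⟩ :=
    isCompact_Icc.exists_isMinOn ⟨L₁, left_mem_Icc.mpr hL.le⟩ hfc
  have hmin : ∀ x ∈ Icc L₁ L₂, f x₀ ≤ φ₁ x / ψ₁ x ∧ f x₀ ≤ φ₂ x / ψ₂ x := by
    intro x hx
    have h := hx₀min hx
    simp only [hf_def] at h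
    exact ⟨le_trans h (min_le_left _ _), le_trans h (min_le_right _ _)⟩
  by_cases hm : 0 ≤ f x₀
  · -- nonnegative minimum: conclude directly
    intro x hx
    have hxI : x ∈ Icc L₁ L₂ := Ioo_subset_Icc_self hx
    have h1 : 0 ≤ φ₁ x / ψ₁ x := le_trans hm (hmin x hxI).1
    have h2 : 0 ≤ φ₂ x / ψ₂ x := le_trans hm (hmin x hxI).2
    constructor
    · have := mul_nonneg h1 (hψpos x hxI).1.le
      rwa [div_mul_cancel₀ _ (hψpos x hxI).1.ne'] at this
    · have := mul_nonneg h2 (hψpos x hxI).2.le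
      rwa [div_mul_cancel₀ _ (hψpos x hxI).2.ne'] at this
  · exfalso
    push_neg at hm
    set k : ℝ := -f x₀ with hk_def
    have hk : 0 < k := by rw [hk_def]; linarith
    set w₁ : ℝ → ℝ := fun x => φ₁ x + k * ψ₁ x with hw₁_def
    set w₂ : ℝ → ℝ := fun x => φ₂ x + k * ψ₂ x with hw₂_def
    have hw₁c : ContinuousOn w₁ (Icc L₁ L₂) :=
      hφ₁.add (continuousOn_const.mul hψ₁c)
    have hw₂c : ContinuousOn w₂ (Icc L₁ L₂) :=
      hφ₂.add (continuousOn_const.mul hψ₂c)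
    -- nonnegativity of w
    have hw₁nn : ∀ x ∈ Icc L₁ L₂, 0 ≤ w₁ x := by
      intro x hx
      have h1 : -k ≤ φ₁ x / ψ₁ x := by rw [hk_def, neg_neg]; exact (hmin x hx).1
      have hψ := (hψpos x hx).1
      have := mul_le_mul_of_nonneg_right h1 hψ.le
      rw [div_mul_cancel₀ _ hψ.ne'] at this
      simp only [hw₁_def]; nlinarith
    have hw₂nn : ∀ x ∈ Icc L₁ L₂, 0 ≤ w₂ x := by
      intro x hx
      have h1 : -k ≤ φ₂ x / ψ₂ x := by rw [hk_def, neg_neg]; exact (hmin x hx).2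
      have hψ := (hψpos x hx).2
      have := mul_le_mul_of_nonneg_right h1 hψ.le
      rw [div_mul_cancel₀ _ hψ.ne'] at this
      simp only [hw₂_def]; nlinarith
    -- integrability helpers
    have hint : ∀ (J : ℝ → ℝ), Continuous J → ∀ (g : ℝ → ℝ), ContinuousOn g (Icc L₁ L₂) →
        ∀ x : ℝ, IntervalIntegrable (fun y => J (x - y) * g y) volume L₁ L₂ := by
      intro J hJ g hg x
      apply ContinuousOn.intervalIntegrable
      rw [uIcc_of_le hL.le]
      exact ((hJ.comp (continuous_const.sub continuous_id)).continuousOn).mul hg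
    -- linearity of the nonlocal term
    have hlin : ∀ (J : ℝ → ℝ), Continuous J → ∀ (g h : ℝ → ℝ),
        ContinuousOn g (Icc L₁ L₂) → ContinuousOn h (Icc L₁ L₂) → ∀ x : ℝ,
        (∫ y in L₁..L₂, J (x - y) * (g y + k * h y))
          = (∫ y in L₁..L₂, J (x - y) * g y) + k * ∫ y in L₁..L₂, J (x - y) * h y := by
      intro J hJ g h hg hh x
      rw [← intervalIntegral.integral_const_mul,
          ← intervalIntegral.integral_add (hint J hJ g hg x)
            ((hint J hJ h hh x).const_mul k)]
      congr 1; ext y; ring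
    -- differential inequality for w
    have hw : ∀ x ∈ Ioo L₁ L₂,
        d₁ * ((∫ y in L₁..L₂, J₁ (x - y) * w₁ y) - w₁ x) + a11 * w₁ x + a12 * w₂ x ≤ 0 ∧
        d₂ * ((∫ y in L₁..L₂, J₂ (x - y) * w₂ y) - w₂ x) + a21 * w₁ x + a22 * w₂ x ≤ 0 := by
      intro x hx
      have hxI : x ∈ Icc L₁ L₂ := Ioo_subset_Icc_self hx
      obtain ⟨hM1, hM2⟩ := hM x hx
      obtain ⟨hE1, hE2⟩ := hψeq x hxI
      have hl1 := hlin J₁ hJ₁.1 φ₁ ψ₁ hφ₁ hψ₁c x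
      have hl2 := hlin J₂ hJ₂.1 φ₂ ψ₂ hφ₂ hψ₂c x
      have hψ1 := (hψpos x hxI).1
      have hψ2 := (hψpos x hxI).2
      have hE1k := congrArg (fun t => k * t) hE1
      have hE2k := congrArg (fun t => k * t) hE2
      simp only [mul_zero] at hE1k hE2k
      have hkl1 : 0 ≤ k * (lamP * ψ₁ x) := by positivity
      have hkl2 : 0 ≤ k * (lamP * ψ₂ x) := by positivity
      constructor
      · simp only [hw₁_def, hw₂_def, hl1]
        nlinarith [hE1k, hkl1]
      · simp only [hw₁_def, hw₂_def, hl2]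
        nlinarith [hE2k, hkl2]
    -- key propagation lemma
    have hkey : ∀ x ∈ Ioo L₁ L₂, (w₁ x = 0 ∨ w₂ x = 0) →
        w₁ x = 0 ∧ w₂ x = 0 ∧
        (∀ y ∈ Icc L₁ L₂, J₁ (x - y) * w₁ y = 0) ∧
        (∀ y ∈ Icc L₁ L₂, J₂ (x - y) * w₂ y = 0) := by
      intro x hx hzero
      have hxI : x ∈ Icc L₁ L₂ := Ioo_subset_Icc_self hx
      obtain ⟨h1, h2⟩ := hw x hx
      have hI₁nn : 0 ≤ ∫ y in L₁..L₂, J₁ (x - y) * w₁ y := by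
        apply intervalIntegral.integral_nonneg hL.le
        intro y hy; exact mul_nonneg (hJ₁.2.2.1 _) (hw₁nn y hy)
      have hI₂nn : 0 ≤ ∫ y in L₁..L₂, J₂ (x - y) * w₂ y := by
        apply intervalIntegral.integral_nonneg hL.le
        intro y hy; exact mul_nonneg (hJ₂.2.2.1 _) (hw₂nn y hy)
      have hw1x := hw₁nn x hxI
      have hw2x := hw₂nn x hxI
      have ha21 : 0 < a21 := hsym ▸ ha12
      -- from either zero, derive both zeros
      have hboth : w₁ x = 0 ∧ w₂ x = 0 := by
        rcases hzero with h | h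
        · constructor
          · exact h
          · rw [h] at h1; nlinarith
        · constructor
          · rw [h] at h2; nlinarith
          · exact h
      obtain ⟨hz1, hz2⟩ := hboth
      rw [hz1, hz2] at h1 h2
      have hI₁z : (∫ y in L₁..L₂, J₁ (x - y) * w₁ y) ≤ 0 := by nlinarith
      have hI₂z : (∫ y in L₁..L₂, J₂ (x - y) * w₂ y) ≤ 0 := by nlinarith
      refine ⟨hz1, hz2, ?_, ?_⟩
      · apply aux_integral_zero hL
          (((hJ₁.1.comp (continuous_const.sub continuous_id)).continuousOn).mul hw₁c)
          (fun y hy => mul_nonneg (hJ₁.2.2.1 _) (hw₁nn y hy)) hI₁z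
      · apply aux_integral_zero hL
          (((hJ₂.1.comp (continuous_const.sub continuous_id)).continuousOn).mul hw₂c)
          (fun y hy => mul_nonneg (hJ₂.2.2.1 _) (hw₂nn y hy)) hI₂z
    -- w₁ is positive at the endpoints
    have hwL₁ : 0 < w₁ L₁ := by
      simp only [hw₁_def]
      have := (hψpos L₁ (left_mem_Icc.mpr hL.le)).1
      nlinarith [hbdry.1]
    have hwL₂ : 0 < w₁ L₂ := by
      simp only [hw₁_def]
      have := (hψpos L₂ (right_mem_Icc.mpr hL.le)).1
      nlinarith [hbdry.2.2.1]
    -- x₀ is interior and w vanishes there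
    have hfL₁ : 0 ≤ f L₁ := by
      have h1 := (hψpos L₁ (left_mem_Icc.mpr hL.le)).1
      have h2 := (hψpos L₁ (left_mem_Icc.mpr hL.le)).2
      exact le_min (div_nonneg hbdry.1 h1.le) (div_nonneg hbdry.2.1 h2.le)
    have hfL₂ : 0 ≤ f L₂ := by
      have h1 := (hψpos L₂ (right_mem_Icc.mpr hL.le)).1
      have h2 := (hψpos L₂ (right_mem_Icc.mpr hL.le)).2
      exact le_min (div_nonneg hbdry.2.2.1 h1.le) (div_nonneg hbdry.2.2.2 h2.le)
    have hx₀Ioo : x₀ ∈ Ioo L₁ L₂ := by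
      rcases eq_or_lt_of_le hx₀mem.1 with h | h
      · exfalso; rw [h] at hfL₁; linarith
      rcases eq_or_lt_of_le hx₀mem.2 with h' | h'
      · exfalso; rw [← h'] at hfL₂; linarith
      exact ⟨h, h'⟩
    have hx₀zero : w₁ x₀ = 0 ∨ w₂ x₀ = 0 := by
      have hψ1 := (hψpos x₀ hx₀mem).1
      have hψ2 := (hψpos x₀ hx₀mem).2
      rcases min_cases (φ₁ x₀ / ψ₁ x₀) (φ₂ x₀ / ψ₂ x₀) with ⟨heq, _⟩ | ⟨heq, _⟩
      · left
        have : φ₁ x₀ / ψ₁ x₀ = -k := by rw [hk_def, ← heq]; simp [hf_def]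
        have h2 := congrArg (· * ψ₁ x₀) this
        rw [div_mul_cancel₀ _ hψ1.ne'] at h2
        simp only [hw₁_def]; rw [h2]; ring
      · right
        have : φ₂ x₀ / ψ₂ x₀ = -k := by rw [hk_def, ← heq]; simp [hf_def]
        have h2 := congrArg (· * ψ₂ x₀) this
        rw [div_mul_cancel₀ _ hψ2.ne'] at h2
        simp only [hw₂_def]; rw [h2]; ring
    -- the zero set of w₁
    set Z : Set ℝ := Icc L₁ L₂ ∩ w₁ ⁻¹' {0} with hZ_def
    have hZmem : ∀ x : ℝ, x ∈ Z ↔ x ∈ Icc L₁ L₂ ∧ w₁ x = 0 := by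
      intro x; rw [hZ_def]; simp [Set.mem_inter_iff]
    have hZne : Z.Nonempty :=
      ⟨x₀, (hZmem x₀).mpr ⟨hx₀mem, (hkey x₀ hx₀Ioo hx₀zero).1⟩⟩
    have hZclosed : IsClosed Z := by
      rw [hZ_def]
      exact hw₁c.preimage_isClosed_of_isClosed isClosed_Icc isClosed_singleton
    have hZbdd : BddBelow Z := ⟨L₁, fun x hx => ((hZmem x).mp hx).1.1⟩
    set s : ℝ := sInf Z with hs_def
    have hsZ' : s ∈ Z := hZclosed.csInf_mem hZne hZbdd
    obtain ⟨hsI, hsz⟩ := (hZmem s).mp hsZ'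
    have hsIoo : s ∈ Ioo L₁ L₂ := by
      rcases eq_or_lt_of_le hsI.1 with h | h
      · exfalso; rw [h, hsz] at hwL₁; exact lt_irrefl _ hwL₁
      rcases eq_or_lt_of_le hsI.2 with h' | h'
      · exfalso; rw [← h', hsz] at hwL₂; exact lt_irrefl _ hwL₂
      exact ⟨h, h'⟩
    obtain ⟨_, _, hkey1, _⟩ := hkey s hsIoo (Or.inl hsz)
    -- J₁ is positive near 0
    have hJcont : ContinuousAt J₁ 0 := hJ₁.1.continuousAt
    rw [Metric.continuousAt_iff] at hJcont
    obtain ⟨δ, hδ, hδc⟩ := hJcont (J₁ 0) hJ₁.2.2.2.2.1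
    have hJpos : ∀ z : ℝ, |z| < δ → 0 < J₁ z := by
      intro z hz
      have := hδc (by simpa [Real.dist_eq] using hz)
      rw [Real.dist_eq, abs_lt] at this
      linarith [this.1]
    -- pick a point slightly to the left of s
    set y : ℝ := (max L₁ (s - δ) + s) / 2 with hy_def
    have hmaxlt : max L₁ (s - δ) < s := max_lt hsIoo.1 (by linarith)
    have hys : y < s := by rw [hy_def]; linarith
    have hyL₁ : L₁ < y := by
      have := le_max_left L₁ (s - δ)
      rw [hy_def]; nlinarith [hsIoo.1]
    have hyI : y ∈ Icc L₁ L₂ := ⟨hyL₁.le, by linarith [hsIoo.2]⟩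
    have hydist : |s - y| < δ := by
      have h1 : s - δ ≤ max L₁ (s - δ) := le_max_right _ _
      rw [abs_lt]; constructor
      · linarith
      · rw [hy_def]; nlinarith
    have hJsy : 0 < J₁ (s - y) := hJpos _ hydist
    have hw₁y : w₁ y = 0 := by
      have := hkey1 y hyI
      rcases mul_eq_zero.mp this with h | h
      · exact absurd h hJsy.ne'
      · exact h
    have : s ≤ y := csInf_le hZbdd ((hZmem y).mpr ⟨hyI, hw₁y⟩)
    linarith

end
end
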